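/- Let ψ₁ : ℝ → ℝ be a C² function such that ψ₁ and its derivatives are bounded, and let φ₀(z) = (1 + tanh(3z))/2. Then ∫_{−∞}^{∞} φ₀'(z) [ψ₁''(z) − W''(φ₀(z)) ψ₁(z)] dz = 0, where W(u) = 18u²(1−u)². -/

import Mathlib

noncomputable def W : ℝ → ℝ := fun u => 18 * u ^ 2 * (1 - u) ^ 2

noncomputable def phi0 : ℝ → ℝ := fun z => (1 + Real.tanh (3 * z)) / 2

/-!
Differentiating the profile equation `φ₀'' = W'(φ₀)` shows that `φ₀'` solves the linearized
equation `p'' = W''(φ₀) p`. The integrand is therefore `φ₀' ψ₁'' - φ₀''' ψ₁`, the derivative of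
the Wronskian `φ₀' ψ₁' - φ₀'' ψ₁`. Since `φ₀(z) = σ(6z)` is a logistic curve, `φ₀'` is
integrable, and so are `φ₀'' = 6 (1 - 2φ₀) φ₀'` and `φ₀''' = W''(φ₀) φ₀'`; with `ψ₁`, `ψ₁'`,
`ψ₁''` bounded, the Wronskian and its derivative are integrable, so the integral vanishes.
-/

open Real MeasureTheory Filter Topology Set

theorem integrable_deriv_of_nonneg_of_tendsto {g g' : ℝ → ℝ} {a b : ℝ}
    (hderiv : ∀ x, HasDerivAt g (g' x) x) (hpos : ∀ x, 0 ≤ g' x)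
    (hbot : Tendsto g atBot (𝓝 a)) (htop : Tendsto g atTop (𝓝 b)) : Integrable g' := by
  have hIoi : IntegrableOn g' (Ioi 0) :=
    integrableOn_Ioi_deriv_of_nonneg' (fun x _ ↦ hderiv x) (fun x _ ↦ hpos x) htop
  have hIic : IntegrableOn g' (Iic 0) := by
    have hrefl : IntegrableOn (fun x ↦ g' (-x)) (Ioi 0) :=
      integrableOn_Ioi_deriv_of_nonneg' (g := fun x ↦ -g (-x))
        (fun x _ ↦ by simpa using ((hderiv (-x)).comp x (hasDerivAt_neg x)).fun_neg)
        (fun x _ ↦ hpos (-x)) (hbot.comp tendsto_neg_atTop_atBot).neg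
    exact (integrableOn_Iic_iff_integrableOn_Iio).mpr (by simpa using hrefl.comp_neg)
  rw [← integrableOn_univ, ← Iic_union_Ioi (a := (0 : ℝ))]
  exact hIic.union hIoi

theorem integral_mul_deriv_deriv_sub_deriv_deriv_mul_eq_zero {p ψ : ℝ → ℝ}
    (hp : Differentiable ℝ p) (hp' : Differentiable ℝ (deriv p))
    (hpi : Integrable p) (hp'i : Integrable (deriv p)) (hp''i : Integrable (deriv (deriv p)))
    (hψ : Differentiable ℝ ψ) (hψ' : Differentiable ℝ (deriv ψ))
    (hb0 : ∃ M, ∀ z, |ψ z| ≤ M) (hb1 : ∃ M, ∀ z, |deriv ψ z| ≤ M)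
    (hb2 : ∃ M, ∀ z, |deriv (deriv ψ) z| ≤ M) :
    ∫ z, (p z * deriv (deriv ψ) z - deriv (deriv p) z * ψ z) = 0 := by
  have mul_bdd : ∀ {f g : ℝ → ℝ}, Integrable f → Measurable g → (∃ M, ∀ z, |g z| ≤ M) →
      Integrable (fun z ↦ f z * g z) := fun hf hg ⟨M, hM⟩ ↦
    hf.mul_bdd hg.aestronglyMeasurable (ae_of_all _ hM)
  have hwronsk : ∀ z, HasDerivAt (fun z ↦ p z * deriv ψ z - deriv p z * ψ z)
      (p z * deriv (deriv ψ) z - deriv (deriv p) z * ψ z) z := fun z ↦ by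
    refine (((hp z).hasDerivAt.fun_mul (hψ' z).hasDerivAt).fun_sub
      ((hp' z).hasDerivAt.fun_mul (hψ z).hasDerivAt)).congr_deriv ?_
    ring
  refine integral_eq_zero_of_hasDerivAt_of_integrable hwronsk ?_ ?_
  · exact (mul_bdd hpi (measurable_deriv _) hb2).sub (mul_bdd hp''i hψ.continuous.measurable hb0)
  · exact (mul_bdd hpi (measurable_deriv _) hb1).sub (mul_bdd hp'i hψ.continuous.measurable hb0)

theorem phi0_eq_sigmoid (z : ℝ) : phi0 z = sigmoid (6 * z) := by
  have h : exp (-(6 * z)) = exp (-(3 * z)) / exp (3 * z) := by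
    rw [← exp_sub]; congr 1; ring
  rw [phi0, tanh_eq, sigmoid_def, h]
  field_simp
  ring

theorem hasDerivAt_phi0 (z : ℝ) : HasDerivAt phi0 (6 * (phi0 z * (1 - phi0 z))) z := by
  rw [show phi0 = fun z ↦ sigmoid (6 * z) from funext phi0_eq_sigmoid]
  exact ((hasDerivAt_sigmoid (6 * z)).comp z ((hasDerivAt_id z).const_mul 6)).congr_deriv (by ring)

theorem phi0_mem_Icc (z : ℝ) : phi0 z ∈ Icc 0 1 := by
  rw [phi0_eq_sigmoid]
  exact ⟨sigmoid_nonneg _, sigmoid_le_one _⟩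

theorem tendsto_phi0_atTop : Tendsto phi0 atTop (𝓝 1) := by
  simpa only [funext phi0_eq_sigmoid, Function.comp_def, id] using
    tendsto_sigmoid_atTop.comp (tendsto_id.const_mul_atTop (by norm_num : (0 : ℝ) < 6))

theorem tendsto_phi0_atBot : Tendsto phi0 atBot (𝓝 0) := by
  simpa only [funext phi0_eq_sigmoid, Function.comp_def, id] using
    tendsto_sigmoid_atBot.comp (tendsto_id.const_mul_atBot (by norm_num : (0 : ℝ) < 6))

theorem deriv_phi0 : deriv phi0 = fun z ↦ 6 * (phi0 z * (1 - phi0 z)) :=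
  funext fun z ↦ (hasDerivAt_phi0 z).deriv

theorem hasDerivAt_deriv_phi0 (z : ℝ) :
    HasDerivAt (deriv phi0) (6 * (1 - 2 * phi0 z) * deriv phi0 z) z := by
  rw [deriv_phi0]
  exact (((hasDerivAt_phi0 z).fun_mul ((hasDerivAt_phi0 z).const_sub 1)).const_mul 6).congr_deriv
    (by ring)

theorem deriv_deriv_phi0 : deriv (deriv phi0) = fun z ↦ 6 * (1 - 2 * phi0 z) * deriv phi0 z :=
  funext fun z ↦ (hasDerivAt_deriv_phi0 z).deriv

theorem deriv_W : deriv W = fun u ↦ 36 * u * (1 - u) * (1 - 2 * u) :=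
  funext fun u ↦ ((((hasDerivAt_pow 2 u).const_mul 18).fun_mul
    (((hasDerivAt_id' u).const_sub 1).fun_pow 2)).congr_deriv (by ring)).deriv

theorem hasDerivAt_deriv_W (u : ℝ) : HasDerivAt (deriv W) (36 * (1 - 6 * u + 6 * u ^ 2)) u := by
  rw [deriv_W]
  exact ((((((hasDerivAt_id' u).const_mul 36).fun_mul ((hasDerivAt_id' u).const_sub 1)).fun_mul
    (((hasDerivAt_id' u).const_mul 2).const_sub 1)))).congr_deriv (by ring)

theorem deriv_deriv_W : deriv (deriv W) = fun u ↦ 36 * (1 - 6 * u + 6 * u ^ 2) :=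
  funext fun u ↦ (hasDerivAt_deriv_W u).deriv

theorem deriv_deriv_phi0_eq_deriv_W_comp (z : ℝ) : deriv (deriv phi0) z = deriv W (phi0 z) := by
  rw [deriv_deriv_phi0, deriv_W, deriv_phi0]
  ring

theorem hasDerivAt_deriv_deriv_phi0 (z : ℝ) :
    HasDerivAt (deriv (deriv phi0)) (deriv (deriv W) (phi0 z) * deriv phi0 z) z := by
  have hW := hasDerivAt_deriv_W (phi0 z)
  rw [funext deriv_deriv_phi0_eq_deriv_W_comp, hW.deriv, (hasDerivAt_phi0 z).deriv]
  exact hW.comp z (hasDerivAt_phi0 z)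

theorem deriv_deriv_deriv_phi0 :
    deriv (deriv (deriv phi0)) = fun z ↦ deriv (deriv W) (phi0 z) * deriv phi0 z :=
  funext fun z ↦ (hasDerivAt_deriv_deriv_phi0 z).deriv

theorem integrable_deriv_phi0 : Integrable (deriv phi0) :=
  integrable_deriv_of_nonneg_of_tendsto (fun z ↦ (hasDerivAt_phi0 z).differentiableAt.hasDerivAt)
    (fun z ↦ by
      rw [deriv_phi0]
      obtain ⟨h0, h1⟩ := phi0_mem_Icc z
      exact mul_nonneg (by norm_num) (mul_nonneg h0 (sub_nonneg.2 h1)))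
    tendsto_phi0_atBot tendsto_phi0_atTop

theorem integrable_comp_phi0_mul_deriv_phi0 {h : ℝ → ℝ} (hh : Continuous h) :
    Integrable (fun z ↦ h (phi0 z) * deriv phi0 z) := by
  obtain ⟨C, hC⟩ :=
    (isCompact_Icc (a := (0 : ℝ)) (b := 1)).exists_bound_of_continuousOn hh.continuousOn
  have hphi0 : Continuous phi0 :=
    continuous_iff_continuousAt.2 fun z ↦ (hasDerivAt_phi0 z).continuousAt
  exact integrable_deriv_phi0.bdd_mul (hh.comp hphi0).aestronglyMeasurable
    (ae_of_all _ fun z ↦ hC _ (phi0_mem_Icc z))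

theorem solvability_condition (ψ₁ : ℝ → ℝ) (hψ : ContDiff ℝ 2 ψ₁)
    (hb0 : ∃ M, ∀ z, |ψ₁ z| ≤ M)
    (hb1 : ∃ M, ∀ z, |deriv ψ₁ z| ≤ M)
    (hb2 : ∃ M, ∀ z, |deriv (deriv ψ₁) z| ≤ M) :
    ∫ z : ℝ, deriv phi0 z *
      (deriv (deriv ψ₁) z - deriv (deriv W) (phi0 z) * ψ₁ z) = 0 := by
  have hintegrand : ∀ z, deriv phi0 z * (deriv (deriv ψ₁) z - deriv (deriv W) (phi0 z) * ψ₁ z) =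
      deriv phi0 z * deriv (deriv ψ₁) z - deriv (deriv (deriv phi0)) z * ψ₁ z := fun z ↦ by
    rw [deriv_deriv_deriv_phi0]
    ring
  simp_rw [hintegrand]
  refine integral_mul_deriv_deriv_sub_deriv_deriv_mul_eq_zero
    (fun z ↦ (hasDerivAt_deriv_phi0 z).differentiableAt)
    (fun z ↦ (hasDerivAt_deriv_deriv_phi0 z).differentiableAt)
    integrable_deriv_phi0 ?_ ?_ (hψ.differentiable two_ne_zero) hψ.differentiable_deriv_two
    hb0 hb1 hb2
  · rw [deriv_deriv_phi0]
    exact integrable_comp_phi0_mul_deriv_phi0 (h := fun u ↦ 6 * (1 - 2 * u)) (by fun_prop)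
  · rw [deriv_deriv_deriv_phi0]
    exact integrable_comp_phi0_mul_deriv_phi0 (by rw [deriv_deriv_W]; fun_prop)
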